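/- Let a > 0, and set β = 4πa/(3a² + 1), m = (a³ + a)/2, and S = πa². Then (3/(8πβ)) · (8π²/3) · a²(1 − a²)/(1 + 3a²) = m − S/β. Equivalently, the normalized renormalized volume of the black hole equals the free energy ⟨E⟩ − S/β, and both sides equal a(1 − a²)/4. -/
import Mathlib


open Real

theorem renormalized_volume_eq_free_energy (a : ℝ) (ha : 0 < a) :
    let β := 4 * π * a / (3 * a ^ 2 + 1)
    let m := (a ^ 3 + a) / 2
    let S := π * a ^ 2
    (3 / (8 * π * β)) * ((8 * π ^ 2 / 3) * (a ^ 2 * (1 - a ^ 2) / (1 + 3 * a ^ 2)))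
        = m - S / β ∧
    (3 / (8 * π * β)) * ((8 * π ^ 2 / 3) * (a ^ 2 * (1 - a ^ 2) / (1 + 3 * a ^ 2)))
        = a * (1 - a ^ 2) / 4 := by
  intro β m S
  have hπ := Real.pi_pos
  have h1 : (3 * a ^ 2 + 1) > 0 := by positivity
  have hβ : β = 4 * π * a / (3 * a ^ 2 + 1) := rfl
  have hβpos : 0 < β := by rw [hβ]; positivity
  constructor <;>
  · rw [hβ]
    field_simp
    ring
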